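/- arXiv:2109.09931 — 2 statements merged into one kernel-verified Lean document; each statement's English description precedes it below -/
import Mathlib

section
/- For every n ≥ 4, every M_1^{(2)}-saturated 2-uniform convex geometric hypergraph on Ω_n has exactly n edges; in particular sat_○(n, M_1^{(2)}) = n. -/
open Finset

/-- An abstract convex geometric hypergraph: `m` vertices on a circle, with the
cyclic ordering `0 < 1 < ⋯ < m-1 < 0`, together with a family of edges. -/
structure CGH where
  m : ℕ
  edges : Finset (Finset (Fin m))

/-- A list of points of `Fin n` is in (strict) cyclic order if some rotation of it
is strictly increasing in the linear order of `Fin n`. -/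
def CyclicSorted {n : ℕ} (l : List (Fin n)) : Prop :=
  ∃ k : ℕ, (l.rotate k).Chain' (· < ·)

/-- `H` contains a subhypergraph isomorphic to the convex geometric hypergraph `F`:
there is an injection of the vertices of `F` into `Fin n` respecting the cyclic
orderings and sending every edge of `F` to an edge of `H`. -/
def HasCopy (F : CGH) {n : ℕ} (H : Finset (Finset (Fin n))) : Prop :=
  ∃ f : Fin F.m → Fin n, Function.Injective f ∧ CyclicSorted (List.ofFn f) ∧
    ∀ e ∈ F.edges, e.image f ∈ H

/-- `H` is an `F`-saturated `r`-uniform convex geometric hypergraph on `Fin n`. -/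
def IsSat (F : CGH) (r : ℕ) {n : ℕ} (H : Finset (Finset (Fin n))) : Prop :=
  (∀ h ∈ H, h.card = r) ∧ ¬ HasCopy F H ∧
    ∀ e : Finset (Fin n), e.card = r → e ∉ H → HasCopy F (insert e H)

/-- The saturation number `sat_○(n, F)` for `r`-uniform cgh's on `Fin n`. -/
noncomputable def satNum (F : CGH) (r n : ℕ) : ℕ :=
  sInf {k | ∃ H : Finset (Finset (Fin n)), IsSat F r H ∧ H.card = k}

/-- `M_1^{(r)}`: two geometrically disjoint `r`-tuples. -/
def M1r (r : ℕ) : CGH where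
  m := 2 * r
  edges := {Finset.univ.filter (fun i : Fin (2 * r) => (i : ℕ) < r),
            Finset.univ.filter (fun i : Fin (2 * r) => r ≤ (i : ℕ))}

def M1cgh : CGH := ⟨6, {({0, 1, 2} : Finset (Fin 6)), ({3, 4, 5} : Finset (Fin 6))}⟩
def M2cgh : CGH := ⟨6, {({0, 1, 3} : Finset (Fin 6)), ({2, 4, 5} : Finset (Fin 6))}⟩
def M3cgh : CGH := ⟨6, {({0, 2, 4} : Finset (Fin 6)), ({1, 3, 5} : Finset (Fin 6))}⟩
def S1cgh : CGH := ⟨5, {({0, 1, 4} : Finset (Fin 5)), ({0, 2, 3} : Finset (Fin 5))}⟩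
def S2cgh : CGH := ⟨5, {({0, 1, 2} : Finset (Fin 5)), ({0, 3, 4} : Finset (Fin 5))}⟩
def S3cgh : CGH := ⟨5, {({0, 1, 3} : Finset (Fin 5)), ({0, 2, 4} : Finset (Fin 5))}⟩
def D1cgh : CGH := ⟨4, {({0, 1, 2} : Finset (Fin 4)), ({0, 2, 3} : Finset (Fin 4))}⟩
def D2cgh : CGH := ⟨4, {({0, 1, 2} : Finset (Fin 4)), ({0, 1, 3} : Finset (Fin 4))}⟩

/-- The closed clockwise arc `[a, b]` in `Fin n`. -/
def arcCC {n : ℕ} (a b : Fin n) : Finset (Fin n) :=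
  if a ≤ b then Finset.univ.filter (fun x => a ≤ x ∧ x ≤ b)
  else Finset.univ.filter (fun x => a ≤ x ∨ x ≤ b)

/-- The open clockwise arc `(a, b)` in `Fin n`. -/
def arcOO {n : ℕ} (a b : Fin n) : Finset (Fin n) :=
  if a < b then Finset.univ.filter (fun x => a < x ∧ x < b)
  else Finset.univ.filter (fun x => a < x ∨ x < b)

/-- The tuple `(w_1, …, w_{2ℓ+1})` (`0`-indexed here) consists of distinct points with
`w_1 < w_3 < ⋯ < w_{2ℓ+1} < w_2 < w_4 < ⋯ < w_{2ℓ} < w_1` in the cyclic order. -/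
def SemiValid {n : ℕ} (ℓ : ℕ) (w : Fin (2 * ℓ + 1) → Fin n) : Prop :=
  Function.Injective w ∧
    CyclicSorted (List.ofFn fun p : Fin (2 * ℓ + 1) =>
      w ⟨(2 * (p : ℕ)) % (2 * ℓ + 1), Nat.mod_lt _ (by omega)⟩)

/-- A semi-valid tuple is `r`-valid if moreover `|[w_i, w_{i-1}]| ≥ r` for all `i`. -/
def RValid {n : ℕ} (r ℓ : ℕ) (w : Fin (2 * ℓ + 1) → Fin n) : Prop :=
  SemiValid ℓ w ∧ ∀ i : Fin (2 * ℓ + 1), r ≤ (arcCC (w i) (w (i - 1))).card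

/-- `H_n^{(r)}(C)`: all `r`-sets meeting every interval `[w_i, w_{i-1}]`. -/
def HnC {n : ℕ} (r ℓ : ℕ) (w : Fin (2 * ℓ + 1) → Fin n) : Finset (Finset (Fin n)) :=
  (Finset.powersetCard r Finset.univ).filter fun e =>
    ∀ i : Fin (2 * ℓ + 1), (e ∩ arcCC (w i) (w (i - 1))).Nonempty

/-- `j` is the vertex `λ(v)` for `v` in `H`. -/
def IsLam {n : ℕ} [NeZero n] (H : Finset (Finset (Fin n))) (v j : Fin n) : Prop :=
  (∃ h ∈ H, v ∈ h ∧ h ⊆ arcCC j v) ∧ ¬ ∃ h ∈ H, v ∈ h ∧ h ⊆ arcCC (j + 1) v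

/-- `j` is the vertex `ρ(v)` for `v` in `H`. -/
def IsRho {n : ℕ} [NeZero n] (H : Finset (Finset (Fin n))) (v j : Fin n) : Prop :=
  (∃ h ∈ H, v ∈ h ∧ h ⊆ arcCC v j) ∧ ¬ ∃ h ∈ H, v ∈ h ∧ h ⊆ arcCC v (j - 1)

noncomputable def lamF {n : ℕ} [NeZero n] (H : Finset (Finset (Fin n))) (v : Fin n) : Fin n :=
  letI := Classical.propDecidable (∃ j, IsLam H v j)
  if h : ∃ j, IsLam H v j then h.choose else v

noncomputable def rhoF {n : ℕ} [NeZero n] (H : Finset (Finset (Fin n))) (v : Fin n) : Fin n :=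
  letI := Classical.propDecidable (∃ j, IsRho H v j)
  if h : ∃ j, IsRho H v j then h.choose else v

/-- Strict cyclic betweenness on `Fin n`. -/
def CyclicSbtw {n : ℕ} (a b c : Fin n) : Prop :=
  (a < b ∧ b < c) ∨ (b < c ∧ c < a) ∨ (c < a ∧ a < b)

/-- Isomorphism of two cgh's on `Fin n`: a bijection of the vertex set respecting the
cyclic order and inducing a bijection of the edge sets. -/
def CGHIso {n : ℕ} (H H' : Finset (Finset (Fin n))) : Prop :=
  ∃ g : Fin n ≃ Fin n,
    (∀ a b c : Fin n, CyclicSbtw a b c → CyclicSbtw (g a) (g b) (g c)) ∧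
    ∀ e : Finset (Fin n), e ∈ H ↔ e.image g ∈ H'

/-- The 3-cgh `H_n^{(3)}`: all triples containing `v_0`, together with all triples
containing one of the pairs `{v_1, v_{n-2}}`, `{v_1, v_{n-1}}`, `{v_2, v_{n-1}}`. -/
def Hn3 (n : ℕ) (hn : 6 ≤ n) : Finset (Finset (Fin n)) :=
  (Finset.powersetCard 3 Finset.univ).filter fun e =>
    (⟨0, by omega⟩ : Fin n) ∈ e ∨
    ((⟨1, by omega⟩ : Fin n) ∈ e ∧ (⟨n - 2, by omega⟩ : Fin n) ∈ e) ∨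
    ((⟨1, by omega⟩ : Fin n) ∈ e ∧ (⟨n - 1, by omega⟩ : Fin n) ∈ e) ∨
    ((⟨2, by omega⟩ : Fin n) ∈ e ∧ (⟨n - 1, by omega⟩ : Fin n) ∈ e)

/-- Saturation with respect to a family of cgh's. -/
def FamSat (ℱ : Set CGH) (r : ℕ) {n : ℕ} (H : Finset (Finset (Fin n))) : Prop :=
  (∀ h ∈ H, h.card = r) ∧ (∀ F ∈ ℱ, ¬ HasCopy F H) ∧
    ∀ e : Finset (Fin n), e.card = r → e ∉ H → ∃ F ∈ ℱ, HasCopy F (insert e H)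

noncomputable def famSatNum (ℱ : Set CGH) (r n : ℕ) : ℕ :=
  sInf {k | ∃ H : Finset (Finset (Fin n)), FamSat ℱ r H ∧ H.card = k}

/-- Rotation of a point of `Fin n` by an integer amount `m`. -/
def finShift {n : ℕ} (hn : 0 < n) (v : Fin n) (m : ℤ) : Fin n :=
  ⟨(((v : ℤ) + m) % (n : ℤ)).toNat, by
    have h0 : (0 : ℤ) < (n : ℤ) := by exact_mod_cast hn
    have h1 := Int.emod_nonneg ((v : ℤ) + m) (by omega : (n : ℤ) ≠ 0)
    have h2 := Int.emod_lt_of_pos ((v : ℤ) + m) h0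
    omega⟩

/-- The tuple `w` is `(i,k)`-consecutive: starting from position `i`, the entries at
positions `i, i+2, …, i+2(k-1)` are `k` consecutive points `v_j, v_{j+1}, …, v_{j+k-1}`. -/
def ConsecAt {n ℓ : ℕ} (hn : 0 < n) (w : Fin (2 * ℓ + 1) → Fin n)
    (i : Fin (2 * ℓ + 1)) (k : ℕ) : Prop :=
  ∃ j : Fin n, ∀ s : ℕ, s < k →
    w (i + ⟨(2 * s) % (2 * ℓ + 1), Nat.mod_lt _ (by omega)⟩) = finShift hn j s

/-- The tuple `C_{i,k,m}`: the `k` consecutive points at positions `i, i+2, …, i+2(k-1)`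
are rotated by `m` units; all other entries are unchanged. -/
def shiftTuple {n ℓ : ℕ} (hn : 0 < n) (w : Fin (2 * ℓ + 1) → Fin n)
    (i : Fin (2 * ℓ + 1)) (k : ℕ) (m : ℤ) : Fin (2 * ℓ + 1) → Fin n :=
  fun p => if (p - i).val % 2 = 0 ∧ (p - i).val / 2 < k then finShift hn (w p) m else w p

/-!
Send an edge `{a, b}` to `a + b` modulo `n`. Two distinct edges with the
same sum are parallel chords, hence disjoint and non-crossing, so on an `M₁`-free graph this map
is injective. For surjectivity, rotate `H` so that the chords with a given sum become the nested
chords `{x, s - x}` with `s ∈ {n - 2, n - 1}`. A chord missing from a saturated `H` is blocked by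
an edge lying strictly on one of its sides. The innermost chord has no room for an edge inside
and the outermost none outside, so some edge lies inside one chord while another lies outside
the next one; these two edges are disjoint and non-crossing.
-/

theorem exists_isSat (F : CGH) (r n : ℕ) (hF : F.edges.Nonempty) :
    ∃ H : Finset (Finset (Fin n)), IsSat F r H := by
  classical
  let P : Finset (Finset (Fin n)) → Prop := fun H => (∀ h ∈ H, h.card = r) ∧ ¬ HasCopy F H
  have hempty : P ∅ := by
    obtain ⟨e, he⟩ := hF
    exact ⟨fun h hh => absurd hh (notMem_empty h), fun ⟨f, _, _, hf⟩ => notMem_empty _ (hf e he)⟩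
  obtain ⟨H, ⟨hunif, hfree⟩, hmax⟩ := exists_maximal_of_wellFoundedGT P ⟨∅, hempty⟩
  refine ⟨H, hunif, hfree, fun e he hnot => ?_⟩
  by_contra hcopy
  have hins : P (insert e H) := ⟨forall_mem_insert _ _ _ |>.mpr ⟨he, hunif⟩, hcopy⟩
  exact hnot (hmax hins (subset_insert e H) (mem_insert_self e H))

theorem satNum_eq_of_forall_card_eq {F : CGH} {r n k : ℕ}
    (hex : ∃ H : Finset (Finset (Fin n)), IsSat F r H)
    (hcard : ∀ H : Finset (Finset (Fin n)), IsSat F r H → H.card = k) :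
    satNum F r n = k := by
  obtain ⟨H, hH⟩ := hex
  have : {k' | ∃ H : Finset (Finset (Fin n)), IsSat F r H ∧ H.card = k'} = {k} := by
    ext k'
    exact ⟨fun ⟨H', hH', hk'⟩ => hk' ▸ hcard H' hH', fun hk' => ⟨H, hH, hk' ▸ hcard H hH⟩⟩
  rw [satNum, this, csInf_singleton]

theorem pair_eq_pair_of_lt {α : Type*} [LinearOrder α] {a b c d : α} (hab : a < b) (hcd : c < d)
    (h : ({a, b} : Finset α) = {c, d}) : a = c ∧ b = d := by
  have ha : a ∈ ({c, d} : Finset α) := h ▸ mem_insert_self a {b}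
  have hb : b ∈ ({c, d} : Finset α) := h ▸ mem_insert_of_mem (mem_singleton_self b)
  simp only [mem_insert, mem_singleton] at ha hb
  constructor <;> rcases ha with ha | ha <;> rcases hb with hb | hb <;> order

theorem exists_lt_eq_pair_of_card_eq_two {α : Type*} [LinearOrder α] {e : Finset α}
    (he : e.card = 2) : ∃ a b, a < b ∧ e = {a, b} := by
  obtain ⟨a, b, hab, rfl⟩ := card_eq_two.mp he
  rcases hab.lt_or_gt with h | h
  exacts [⟨a, b, h, rfl⟩, ⟨b, a, h, pair_comm a b⟩]

section CyclicOrder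

variable {n : ℕ}

theorem CyclicSorted.nodup {l : List (Fin n)} (h : CyclicSorted l) : l.Nodup := by
  obtain ⟨k, hk⟩ := h
  exact List.nodup_rotate.mp (List.isChain_iff_pairwise.mp hk).nodup

theorem cyclicSorted_four_iff (a b c d : Fin n) :
    CyclicSorted [a, b, c, d] ↔ a < b ∧ b < c ∧ c < d ∨ b < c ∧ c < d ∧ d < a ∨
      c < d ∧ d < a ∧ a < b ∨ d < a ∧ a < b ∧ b < c := by
  have rot : ∀ k, [a, b, c, d].rotate k = [a, b, c, d].rotate (k % 4) := fun k => by
    rw [← List.rotate_mod]; rfl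
  have chain : ∀ x y z w : Fin n, [x, y, z, w].IsChain (· < ·) ↔ x < y ∧ y < z ∧ z < w := by
    simp [List.isChain_cons_cons]
  constructor
  · rintro ⟨k, hk⟩
    rw [rot] at hk
    have : k % 4 < 4 := Nat.mod_lt _ (by norm_num)
    interval_cases k % 4
    · exact Or.inl ((chain a b c d).mp hk)
    · exact Or.inr (Or.inl ((chain b c d a).mp hk))
    · exact Or.inr (Or.inr (Or.inl ((chain c d a b).mp hk)))
    · exact Or.inr (Or.inr (Or.inr ((chain d a b c).mp hk)))
  · rintro (h | h | h | h)
    exacts [⟨0, (chain a b c d).mpr h⟩, ⟨1, (chain b c d a).mpr h⟩, ⟨2, (chain c d a b).mpr h⟩,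
      ⟨3, (chain d a b c).mpr h⟩]

theorem CyclicSorted.four_add {a b c d : Fin n} (h : CyclicSorted [a, b, c, d]) (k : Fin n) :
    CyclicSorted [a + k, b + k, c + k, d + k] := by
  rw [cyclicSorted_four_iff] at h ⊢
  simp only [Fin.lt_def, Fin.val_add_eq_ite] at h ⊢
  split_ifs <;> omega

/-- The chords `ab` and `cd` of the circle, with `a < b` and `c < d`, are disjoint and do not
cross. -/
def Unlinked (a b c d : Fin n) : Prop :=
  b < c ∨ d < a ∨ a < c ∧ d < b ∨ c < a ∧ b < d

theorem Unlinked.symm {a b c d : Fin n} (h : Unlinked a b c d) : Unlinked c d a b := by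
  unfold Unlinked at *
  tauto

end CyclicOrder

section M1Copies

variable {n : ℕ} {H : Finset (Finset (Fin n))}

theorem hasCopy_M1r_two_iff :
    HasCopy (M1r 2) H ↔ ∃ a b c d, CyclicSorted [a, b, c, d] ∧ {a, b} ∈ H ∧ {c, d} ∈ H := by
  change (∃ f : Fin 4 → Fin n, Function.Injective f ∧ CyclicSorted (List.ofFn f) ∧
    ∀ e ∈ ({{0, 1}, {2, 3}} : Finset (Finset (Fin 4))), e.image f ∈ H) ↔ _
  simp only [forall_mem_insert, mem_singleton, forall_eq, image_insert, image_singleton]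
  constructor
  · rintro ⟨f, -, hf, hH⟩
    exact ⟨f 0, f 1, f 2, f 3, hf, hH⟩
  · rintro ⟨a, b, c, d, h, hH⟩
    exact ⟨![a, b, c, d], List.nodup_ofFn.mp h.nodup, h, hH⟩

theorem hasCopy_M1r_two_iff_unlinked :
    HasCopy (M1r 2) H ↔ ∃ a b c d, a < b ∧ c < d ∧ {a, b} ∈ H ∧ {c, d} ∈ H ∧ Unlinked a b c d := by
  rw [hasCopy_M1r_two_iff]
  constructor
  · rintro ⟨a, b, c, d, h, hab, hcd⟩
    rcases (cyclicSorted_four_iff a b c d).mp h with h | h | h | h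
    · exact ⟨a, b, c, d, h.1, h.2.2, hab, hcd, by unfold Unlinked; omega⟩
    · exact ⟨b, a, c, d, by omega, h.2.1, pair_comm a b ▸ hab, hcd, by unfold Unlinked; omega⟩
    · exact ⟨a, b, c, d, h.2.2, h.1, hab, hcd, by unfold Unlinked; omega⟩
    · exact ⟨a, b, d, c, h.2.1, by omega, hab, pair_comm c d ▸ hcd, by unfold Unlinked; omega⟩
  · rintro ⟨a, b, c, d, hab, hcd, habH, hcdH, h | h | h | h⟩
    · exact ⟨a, b, c, d, (cyclicSorted_four_iff a b c d).mpr (by omega), habH, hcdH⟩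
    · exact ⟨a, b, c, d, (cyclicSorted_four_iff a b c d).mpr (by omega), habH, hcdH⟩
    · exact ⟨b, a, c, d, (cyclicSorted_four_iff b a c d).mpr (by omega), pair_comm a b ▸ habH,
        hcdH⟩
    · exact ⟨a, b, d, c, (cyclicSorted_four_iff a b d c).mpr (by omega), habH,
        pair_comm c d ▸ hcdH⟩

def rotateEdges (k : Fin n) (H : Finset (Finset (Fin n))) : Finset (Finset (Fin n)) :=
  H.image fun e => e.image (· + k)

theorem image_add_mem_rotateEdges {e : Finset (Fin n)} (he : e ∈ H) (k : Fin n) :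
    e.image (· + k) ∈ rotateEdges k H :=
  mem_image_of_mem _ he

theorem HasCopy.M1r_two_rotateEdges (h : HasCopy (M1r 2) H) (k : Fin n) :
    HasCopy (M1r 2) (rotateEdges k H) := by
  obtain ⟨a, b, c, d, h, hab, hcd⟩ := hasCopy_M1r_two_iff.mp h
  refine hasCopy_M1r_two_iff.mpr ⟨a + k, b + k, c + k, d + k, h.four_add k, ?_, ?_⟩
  · simpa only [image_insert, image_singleton] using image_add_mem_rotateEdges hab k
  · simpa only [image_insert, image_singleton] using image_add_mem_rotateEdges hcd k

theorem rotateEdges_neg_rotateEdges [NeZero n] (k : Fin n) (H : Finset (Finset (Fin n))) :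
    rotateEdges (-k) (rotateEdges k H) = H := by
  simp only [rotateEdges, image_image, Function.comp_def, add_neg_cancel_right, image_id']

theorem isSat_M1r_two_rotateEdges [NeZero n] (hH : IsSat (M1r 2) 2 H) (k : Fin n) :
    IsSat (M1r 2) 2 (rotateEdges k H) := by
  obtain ⟨hunif, hfree, hadd⟩ := hH
  refine ⟨?_, fun h => hfree (rotateEdges_neg_rotateEdges k H ▸ h.M1r_two_rotateEdges (-k)), ?_⟩
  · simp only [rotateEdges, mem_image, forall_exists_index, and_imp]
    rintro _ e he rfl
    rw [card_image_of_injective _ (add_left_injective k), hunif e he]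
  · intro e he hnot
    have hback : (e.image (· + -k)).image (· + k) = e := by
      simp only [image_image, Function.comp_def, neg_add_cancel_right, image_id']
    have hnot' : e.image (· + -k) ∉ H := fun h => hnot (hback ▸ image_add_mem_rotateEdges h k)
    have hcopy := (hadd _ (by rwa [card_image_of_injective _ (add_left_injective _)]) hnot')
      |>.M1r_two_rotateEdges k
    rwa [rotateEdges, image_insert, hback] at hcopy

end M1Copies

section Saturated

variable {n : ℕ} {H : Finset (Finset (Fin n))}

theorem IsSat.exists_unlinked (hH : IsSat (M1r 2) 2 H) {x y : Fin n} (hxy : x < y)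
    (hnot : {x, y} ∉ H) : ∃ c d, c < d ∧ {c, d} ∈ H ∧ Unlinked x y c d := by
  obtain ⟨a, b, c, d, hab, hcd, habH, hcdH, hu⟩ :=
    hasCopy_M1r_two_iff_unlinked.mp (hH.2.2 _ (card_pair hxy.ne) hnot)
  rw [mem_insert] at habH hcdH
  rcases habH with habH | habH <;> rcases hcdH with hcdH | hcdH
  · obtain ⟨rfl, rfl⟩ := pair_eq_pair_of_lt hab hxy habH
    obtain ⟨rfl, rfl⟩ := pair_eq_pair_of_lt hcd hxy hcdH
    unfold Unlinked at hu
    omega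
  · obtain ⟨rfl, rfl⟩ := pair_eq_pair_of_lt hab hxy habH
    exact ⟨c, d, hcd, hcdH, hu⟩
  · obtain ⟨rfl, rfl⟩ := pair_eq_pair_of_lt hcd hxy hcdH
    exact ⟨a, b, hab, habH, hu.symm⟩
  · exact absurd (hasCopy_M1r_two_iff_unlinked.mpr ⟨a, b, c, d, hab, hcd, habH, hcdH, hu⟩) hH.2.1

theorem unlinked_of_add_eq {a b c d : Fin n} (hne : a ≠ c ∨ b ≠ d)
    (h : a + b = c + d) : Unlinked a b c d := by
  unfold Unlinked
  rw [Fin.ext_iff, Fin.val_add_eq_ite, Fin.val_add_eq_ite] at h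
  split_ifs at h <;> omega

theorem IsSat.injOn_sum [NeZero n] (hH : IsSat (M1r 2) 2 H) :
    Set.InjOn (fun e : Finset (Fin n) => ∑ x ∈ e, x) H := by
  intro e he f hf hsum
  obtain ⟨a, b, hab, rfl⟩ := exists_lt_eq_pair_of_card_eq_two (hH.1 e he)
  obtain ⟨c, d, hcd, rfl⟩ := exists_lt_eq_pair_of_card_eq_two (hH.1 f hf)
  simp only [sum_pair hab.ne, sum_pair hcd.ne] at hsum
  by_contra hne
  have hne' : a ≠ c ∨ b ≠ d := by
    by_contra! h
    exact hne (h.1 ▸ h.2 ▸ rfl)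
  exact hH.2.1 (hasCopy_M1r_two_iff_unlinked.mpr
    ⟨a, b, c, d, hab, hcd, he, hf, unlinked_of_add_eq hne' hsum⟩)

theorem IsSat.exists_add_eq_of_le (hH : IsSat (M1r 2) 2 H) {s : ℕ} (hs : 0 < s) (hsn : s < n)
    (hns : n ≤ s + 2) : ∃ a b : Fin n, a < b ∧ {a, b} ∈ H ∧ (a : ℕ) + b = s := by
  by_contra! hno
  -- the chords `{x, s - x}` are nested; `outside x`: an edge of `H` misses the arc `[x, s - x]`
  let outside (x : ℕ) : Prop := ∃ c d : Fin n, c < d ∧ {c, d} ∈ H ∧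
    ((d : ℕ) < x ∨ s - x < (c : ℕ) ∨ (c : ℕ) < x ∧ s - x < (d : ℕ))
  have blocked (x : ℕ) (hx : 2 * x < s) : outside x ∨
      ∃ c d : Fin n, c < d ∧ {c, d} ∈ H ∧ x < (c : ℕ) ∧ (d : ℕ) < s - x := by
    have hlt : (⟨x, by omega⟩ : Fin n) < ⟨s - x, by omega⟩ := Fin.mk_lt_mk.mpr (by omega)
    obtain ⟨c, d, hcd, hcdH, hu⟩ :=
      hH.exists_unlinked hlt fun h => hno _ _ hlt h (by simp only; omega)
    unfold Unlinked at hu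
    simp only [Fin.lt_def] at hu
    by_cases hin : x < (c : ℕ) ∧ (d : ℕ) < s - x
    exacts [Or.inr ⟨c, d, hcd, hcdH, hin⟩, Or.inl ⟨c, d, hcd, hcdH, by omega⟩]
  have step (x : ℕ) (hx : 2 * x < s) (hout : outside (x + 1)) : outside x := by
    refine (blocked x hx).resolve_right fun ⟨c, d, hcd, hcdH, hin⟩ => hH.2.1 ?_
    obtain ⟨c', d', hcd', hcdH', hout⟩ := hout
    exact hasCopy_M1r_two_iff_unlinked.mpr
      ⟨c, d, c', d', hcd, hcd', hcdH, hcdH', by unfold Unlinked; omega⟩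
  have innermost : outside ((s - 1) / 2) :=
    (blocked _ (by omega)).resolve_right fun ⟨c, d, hcd, _, hin⟩ => by omega
  obtain ⟨c, d, hcd, -, hout⟩ : outside 0 :=
    Nat.decreasingInduction (motive := fun x _ => outside x) (fun x hx => step x (by omega))
      innermost (Nat.zero_le _)
  omega

theorem IsSat.exists_sum_eq [NeZero n] (hH : IsSat (M1r 2) 2 H) (hn : 3 ≤ n) (t : Fin n) :
    ∃ e ∈ H, ∑ x ∈ e, x = t := by
  -- rotating by `k` moves the class of edge sums `t` to `t + 2k`, which is `n - 2` or `n - 1`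
  let k : Fin n := ⟨(n - 1 - t) / 2, by omega⟩
  have hk : (k : ℕ) = (n - 1 - t) / 2 := rfl
  obtain ⟨a, b, hab, habH, habs⟩ := (isSat_M1r_two_rotateEdges hH k).exists_add_eq_of_le
    (s := t + 2 * k) (by omega) (by omega) (by omega)
  obtain ⟨e, he, hek⟩ := mem_image.mp habH
  refine ⟨e, he, add_right_cancel (b := k) (add_right_cancel (b := k) ?_)⟩
  calc ∑ x ∈ e, x + k + k = ∑ x ∈ e.image (· + k), x := by
        rw [sum_image fun _ _ _ _ h => add_right_cancel h, sum_add_distrib, sum_const, hH.1 e he,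
          two_nsmul, add_assoc]
    _ = t + k + k := by
        rw [hek, sum_pair hab.ne, Fin.ext_iff, Fin.val_add_eq_ite, Fin.val_add_eq_ite,
          Fin.val_add_eq_ite]
        split_ifs <;> omega

theorem IsSat.card_eq (hH : IsSat (M1r 2) 2 H) (hn : 3 ≤ n) : H.card = n := by
  have : NeZero n := ⟨by omega⟩
  simpa using card_nbij (fun e => ∑ x ∈ e, x) (fun _ _ => mem_coe.2 (mem_univ _)) hH.injOn_sum
    fun t _ => hH.exists_sum_eq hn t

end Saturated

theorem sat_M1_two (n : ℕ) (hn : 4 ≤ n) :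
    (∀ H : Finset (Finset (Fin n)), IsSat (M1r 2) 2 H → H.card = n) ∧
      satNum (M1r 2) 2 n = n := by
  have hcard (H : Finset (Finset (Fin n))) (hH : IsSat (M1r 2) 2 H) : H.card = n :=
    hH.card_eq (by omega)
  exact ⟨hcard, satNum_eq_of_forall_card_eq (exists_isSat _ _ _ (insert_nonempty _ _)) hcard⟩
end

section
/- Let C = (w_1, …, w_{2ℓ+1}) be a semi-valid tuple in Ω_n. Then H_n^{(2)}(C) consists precisely of the edges {w_i, w_{i+1}} for 1 ≤ i ≤ 2ℓ+1 (indices modulo 2ℓ+1), together with every edge {v_j, w_i} for v_j ∈ (w_{i-1}, w_{i+1}). In particular, |H_n^{(2)}(C)| = n. -/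
open Finset

/-!
Sort the points of `C` as `t 0 < ⋯ < t (2ℓ)`. Semi-validity says that `w i = t (π i)` with
`π (i + 1) = π i + ℓ + 1`, so the intervals `[w_i, w_{i-1}]` are the arcs `[t q, t (q + ℓ)]`,
each holding `ℓ + 1` consecutive points of `C`. Locating every vertex by its position among the
`t q`, one checks that a pair meets all these arcs iff one of its vertices is the *partner* of the
other, where the partner of `t q` is `t (q + ℓ + 1)` and the partner of a vertex in the open gap
after `t (q + ℓ)` is `t q`. Hence `x ↦ {x, partner x}` is a bijection from `Ω_n` onto
`H_n^{(2)}(C)`: the points of `C` give the edges `{w_i, w_{i+1}}`, the other vertices the edges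
`{v, w_i}`.
-/

lemma Fin.mem_iff_val_lt_card_of_isLowerSet {N : ℕ} {s : Finset (Fin N)}
    (hs : IsLowerSet (s : Set (Fin N))) (a : Fin N) : a ∈ s ↔ a.val < #s := by
  constructor
  · intro ha
    have := card_le_card fun b hb => hs (mem_Iic.1 hb) ha
    rwa [Fin.card_Iic] at this
  · intro h
    by_contra ha
    have := card_le_card fun b (hb : b ∈ s) => mem_Iio.2 <| lt_of_not_ge fun hab => ha (hs hab hb)
    rw [Fin.card_Iio] at this
    omega

lemma Nat.mod_eq_ite_of_lt_two_mul {a m : ℕ} (h : a < 2 * m) :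
    a % m = if m ≤ a then a - m else a := by
  split_ifs with hma
  · rw [Nat.mod_eq_sub_mod hma, Nat.mod_eq_of_lt (by omega)]
  · exact Nat.mod_eq_of_lt (by omega)

open Fin.NatCast in
lemma Fin.val_add_natCast_of_lt {N : ℕ} [NeZero N] (q : Fin N) {k : ℕ} (hk : k < N) :
    (q + (k : Fin N)).val = if N ≤ q.val + k then q.val + k - N else q.val + k := by
  rw [Fin.val_add_eq_ite, Fin.val_natCast, Nat.mod_eq_of_lt hk]

lemma Finset.pair_inter_nonempty_iff {α : Type*} [DecidableEq α] {x y : α} {s : Finset α} :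
    ({x, y} ∩ s).Nonempty ↔ x ∈ s ∨ y ∈ s := by
  simp [Finset.Nonempty]

section PositionCode

variable {n N : ℕ} {t : Fin N → Fin n}

/-- The position of `x` relative to the points `t 0 < ⋯ < t (N-1)`: the code `2 * a + 1`
marks the point `t a` and the code `2 * a` the open gap below it, so `0` and `2 * N` are the
two ends of the gap that wraps around the circle. -/
def posCode (t : Fin N → Fin n) (x : Fin n) : ℕ := #{p | t p ≤ x} + #{p | t p < x}

lemma posCode_le (t : Fin N → Fin n) (x : Fin n) : posCode t x ≤ 2 * N := by
  have := card_le_univ (α := Fin N) {p | t p ≤ x}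
  have := card_le_univ (α := Fin N) {p | t p < x}
  simp only [Fintype.card_fin] at *
  unfold posCode
  omega

lemma le_iff_lt_card_filter (ht : Monotone t) (a : Fin N) (x : Fin n) :
    t a ≤ x ↔ a.val < #{p | t p ≤ x} := by
  have hs : IsLowerSet (({p | t p ≤ x} : Finset (Fin N)) : Set (Fin N)) := fun b c hcb hb => by
    simp only [coe_filter, mem_univ, true_and, Set.mem_ofPred_eq] at hb ⊢
    exact (ht hcb).trans hb
  simpa using Fin.mem_iff_val_lt_card_of_isLowerSet hs a

lemma lt_iff_lt_card_filter (ht : Monotone t) (a : Fin N) (x : Fin n) :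
    t a < x ↔ a.val < #{p | t p < x} := by
  have hs : IsLowerSet (({p | t p < x} : Finset (Fin N)) : Set (Fin N)) := fun b c hcb hb => by
    simp only [coe_filter, mem_univ, true_and, Set.mem_ofPred_eq] at hb ⊢
    exact (ht hcb).trans_lt hb
  simpa using Fin.mem_iff_val_lt_card_of_isLowerSet hs a

lemma card_filter_le_le_card_filter_lt_add_one (ht : StrictMono t) (x : Fin n) :
    #{p | t p ≤ x} ≤ #{p | t p < x} + 1 := by
  by_contra! h
  have hN := card_le_univ (α := Fin N) {p | t p ≤ x}
  rw [Fintype.card_fin] at hN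
  set b := #{p | t p < x}
  have hle := (le_iff_lt_card_filter ht.monotone ⟨b + 1, by omega⟩ x).2 (by dsimp only; omega)
  have hlt : t ⟨b, by omega⟩ < x := (ht (Fin.mk_lt_mk.2 (Nat.lt_succ_self b))).trans_le hle
  exact (lt_irrefl b) ((lt_iff_lt_card_filter ht.monotone _ x).1 hlt)

lemma card_filter_lt_le_card_filter_le (x : Fin n) : #{p | t p < x} ≤ #{p | t p ≤ x} :=
  card_le_card fun p hp => by simp only [mem_filter] at hp ⊢; exact ⟨hp.1, hp.2.le⟩

lemma le_iff_lt_posCode (ht : StrictMono t) (a : Fin N) (x : Fin n) :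
    t a ≤ x ↔ 2 * a.val < posCode t x := by
  have := card_filter_le_le_card_filter_lt_add_one ht x
  have := card_filter_lt_le_card_filter_le (t := t) x
  rw [le_iff_lt_card_filter ht.monotone, posCode]
  omega

lemma lt_iff_lt_posCode (ht : StrictMono t) (a : Fin N) (x : Fin n) :
    t a < x ↔ 2 * a.val + 1 < posCode t x := by
  have := card_filter_le_le_card_filter_lt_add_one ht x
  have := card_filter_lt_le_card_filter_le (t := t) x
  rw [lt_iff_lt_card_filter ht.monotone, posCode]
  omega

lemma le_apply_iff_posCode_le (ht : StrictMono t) (b : Fin N) (x : Fin n) :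
    x ≤ t b ↔ posCode t x ≤ 2 * b.val + 1 := by
  rw [← not_lt, lt_iff_lt_posCode ht, not_lt]

lemma lt_apply_iff_posCode_le (ht : StrictMono t) (b : Fin N) (x : Fin n) :
    x < t b ↔ posCode t x ≤ 2 * b.val := by
  rw [← not_le, le_iff_lt_posCode ht, not_lt]

lemma posCode_apply (ht : StrictMono t) (a : Fin N) : posCode t (t a) = 2 * a.val + 1 := by
  have := (le_iff_lt_posCode ht a (t a)).1 le_rfl
  have := (lt_iff_lt_posCode ht a (t a)).not.1 (lt_irrefl _)
  omega

lemma eq_of_posCode_eq (ht : StrictMono t) {a : Fin N} {x : Fin n}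
    (h : posCode t x = 2 * a.val + 1) : x = t a :=
  le_antisymm (not_lt.1 fun hlt => by have := (lt_iff_lt_posCode ht a x).1 hlt; omega)
    ((le_iff_lt_posCode ht a x).2 (by omega))

lemma posCode_eq_iff (ht : StrictMono t) (a : Fin N) (x : Fin n) :
    posCode t x = 2 * a.val + 1 ↔ x = t a :=
  ⟨eq_of_posCode_eq ht, fun h => h ▸ posCode_apply ht a⟩

lemma mem_arcCC_iff_posCode (ht : StrictMono t) (a b : Fin N) (x : Fin n) :
    x ∈ arcCC (t a) (t b) ↔
      if a.val ≤ b.val then 2 * a.val < posCode t x ∧ posCode t x ≤ 2 * b.val + 1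
      else 2 * a.val < posCode t x ∨ posCode t x ≤ 2 * b.val + 1 := by
  simp only [arcCC, ht.le_iff_le, Fin.le_def, le_iff_lt_posCode ht, le_apply_iff_posCode_le ht]
  split_ifs <;> simp only [mem_filter, mem_univ, true_and]

lemma mem_arcOO_iff_posCode (ht : StrictMono t) (a b : Fin N) (x : Fin n) :
    x ∈ arcOO (t a) (t b) ↔
      if a.val < b.val then 2 * a.val + 1 < posCode t x ∧ posCode t x ≤ 2 * b.val
      else 2 * a.val + 1 < posCode t x ∨ posCode t x ≤ 2 * b.val := by
  simp only [arcOO, ht.lt_iff_lt, Fin.lt_def, lt_iff_lt_posCode ht, lt_apply_iff_posCode_le ht]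
  split_ifs <;> simp only [mem_filter, mem_univ, true_and]

end PositionCode

section Sorted
open Fin.NatCast

variable {n ℓ : ℕ} {t : Fin (2 * ℓ + 1) → Fin n}

open Fin.CommRing in
lemma SemiValid.exists_strictMono {w : Fin (2 * ℓ + 1) → Fin n} (hw : SemiValid ℓ w) :
    ∃ t : Fin (2 * ℓ + 1) → Fin n, StrictMono t ∧ ∃ π : Fin (2 * ℓ + 1) → Fin (2 * ℓ + 1),
      Function.Surjective π ∧ (∀ i, w i = t (π i)) ∧ (∀ i, π (i - 1) = π i + ℓ) ∧
        ∀ i, π (i + 1) = π i + ℓ + 1 := by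
  obtain ⟨-, k, hk⟩ := hw
  have hzero : 2 * (ℓ : Fin (2 * ℓ + 1)) + 1 = 0 := by
    exact_mod_cast Fin.natCast_self (2 * ℓ + 1)
  refine ⟨fun q => w (2 * (q + k)), ?_, fun i => (ℓ + 1) * i - k, ?_, fun i => ?_, fun i => ?_,
    fun i => ?_⟩
  · intro q q' hqq'
    have hidx (p : Fin (2 * ℓ + 1)) : (⟨2 * ((p.val + k) % (2 * ℓ + 1)) % (2 * ℓ + 1),
        Nat.mod_lt _ (by omega)⟩ : Fin (2 * ℓ + 1)) = 2 * (p + k) := by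
      ext
      simp [Fin.val_mul, Fin.val_add, Fin.val_natCast, Nat.mul_mod, Nat.add_mod]
    have := List.pairwise_iff_getElem.1 (List.isChain_iff_pairwise.1 hk) q q'
      (by simpa using q.isLt) (by simpa using q'.isLt) hqq'
    simp only [List.getElem_rotate, List.getElem_ofFn, List.length_ofFn] at this
    rwa [hidx, hidx] at this
  · intro q
    exact ⟨2 * (q + k), by linear_combination (q + k) * hzero⟩
  · exact congrArg w (by linear_combination (-i) * hzero)
  · linear_combination -hzero
  · ring

def arcTransversals (r : ℕ) (t : Fin (2 * ℓ + 1) → Fin n) : Finset (Finset (Fin n)) :=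
  {e ∈ powersetCard r univ | ∀ q : Fin (2 * ℓ + 1), (e ∩ arcCC (t q) (t (q + ℓ))).Nonempty}

lemma HnC_eq_arcTransversals {r : ℕ} {w : Fin (2 * ℓ + 1) → Fin n}
    {π : Fin (2 * ℓ + 1) → Fin (2 * ℓ + 1)} (hπ : Function.Surjective π)
    (hw : ∀ i, w i = t (π i)) (hpred : ∀ i, π (i - 1) = π i + ℓ) :
    HnC r ℓ w = arcTransversals r t := by
  ext e
  simp only [HnC, arcTransversals, mem_filter, hw, hpred]
  exact and_congr_right fun _ =>
    (hπ.forall (p := fun q => (e ∩ arcCC (t q) (t (q + ℓ))).Nonempty)).symm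

lemma val_add_half (q : Fin (2 * ℓ + 1)) :
    (q + ℓ).val = if ℓ < q.val then q.val - (ℓ + 1) else q.val + ℓ := by
  rw [Fin.val_add_natCast_of_lt q (by omega)]
  split_ifs <;> omega

lemma val_add_half_add_one (q : Fin (2 * ℓ + 1)) :
    (q + ℓ + 1).val = if ℓ ≤ q.val then q.val - ℓ else q.val + ℓ + 1 := by
  simp only [Fin.val_add_one, Fin.ext_iff, val_add_half, Fin.val_last]
  split_ifs <;> omega

def InArcCode (ℓ q c : ℕ) : Prop :=
  (q ≤ ℓ ∧ 2 * q < c ∧ c ≤ 2 * q + 2 * ℓ + 1) ∨ (ℓ < q ∧ (2 * q < c ∨ c + 2 * ℓ + 1 ≤ 2 * q))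

lemma mem_arcCC_iff_inArcCode (ht : StrictMono t) (q : Fin (2 * ℓ + 1)) (x : Fin n) :
    x ∈ arcCC (t q) (t (q + ℓ)) ↔ InArcCode ℓ q (posCode t x) := by
  rw [mem_arcCC_iff_posCode ht, val_add_half, InArcCode]
  split_ifs <;> omega

/-- The point `t a`, of code `2 * a + 1`, is paired with `t (a + ℓ + 1)`, and a vertex in the gap
of code `2 * g` with `t (g + ℓ)`. -/
def partnerIdx (ℓ c : ℕ) : Fin (2 * ℓ + 1) :=
  ⟨((c + 1) / 2 + ℓ) % (2 * ℓ + 1), Nat.mod_lt _ (by omega)⟩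

lemma val_partnerIdx {c : ℕ} (hc : c ≤ 2 * (2 * ℓ + 1)) :
    (c ≤ 2 * ℓ ∧ (partnerIdx ℓ c).val = (c + 1) / 2 + ℓ) ∨
      (2 * ℓ < c ∧ (partnerIdx ℓ c).val = (c + 1) / 2 - (ℓ + 1)) := by
  have hlt : (c + 1) / 2 + ℓ < 2 * (2 * ℓ + 1) := by omega
  simp only [partnerIdx, Nat.mod_eq_ite_of_lt_two_mul hlt]
  split_ifs <;> omega

lemma forall_inArcCode_iff {γ δ : ℕ} (hγ : γ ≤ 2 * (2 * ℓ + 1)) (hδ : δ ≤ 2 * (2 * ℓ + 1)) :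
    (∀ q < 2 * ℓ + 1, InArcCode ℓ q γ ∨ InArcCode ℓ q δ) ↔
      δ = 2 * (partnerIdx ℓ γ).val + 1 ∨ γ = 2 * (partnerIdx ℓ δ).val + 1 := by
  constructor
  · intro h
    wlog hγδ : γ ≤ δ generalizing γ δ
    · exact (this hδ hγ (fun q hq => (h q hq).symm) (by omega)).symm
    have := val_partnerIdx hγ
    have := val_partnerIdx hδ
    by_contra hne
    -- otherwise both codes miss one of the arcs `ℓ`, `0`, `(γ + 1) / 2`, `(δ + 1) / 2`
    rcases le_or_gt δ (2 * ℓ) with c1 | c1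
    · have := h ℓ (by omega); simp only [InArcCode] at this; omega
    rcases le_or_gt (2 * ℓ + 2) γ with c2 | c2
    · have := h 0 (by omega); simp only [InArcCode] at this; omega
    rcases le_or_gt (2 * ℓ + 2) (δ - γ) with c3 | c3
    · have := h ((γ + 1) / 2) (by omega); simp only [InArcCode] at this; omega
    · have := h ((δ + 1) / 2) (by omega); simp only [InArcCode] at this; omega
  · intro h q hq
    have := val_partnerIdx hγ
    have := val_partnerIdx hδ
    simp only [InArcCode]
    omega

def partner (t : Fin (2 * ℓ + 1) → Fin n) (x : Fin n) : Fin n := t (partnerIdx ℓ (posCode t x))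

lemma forall_pair_inter_arcCC_nonempty_iff (ht : StrictMono t) (x y : Fin n) :
    (∀ q : Fin (2 * ℓ + 1), ({x, y} ∩ arcCC (t q) (t (q + ℓ))).Nonempty) ↔
      y = partner t x ∨ x = partner t y := by
  simp only [pair_inter_nonempty_iff, mem_arcCC_iff_inArcCode ht, partner, ← posCode_eq_iff ht]
  rw [← forall_inArcCode_iff (posCode_le t x) (posCode_le t y)]
  exact ⟨fun h q hq => h ⟨q, hq⟩, fun h q => h q q.isLt⟩

lemma partner_ne_self (hℓ : 1 ≤ ℓ) (ht : StrictMono t) (x : Fin n) : partner t x ≠ x := by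
  intro h
  have := (posCode_eq_iff ht _ x).2 h.symm
  have := val_partnerIdx (posCode_le t x)
  omega

lemma partner_partner_ne_self (hℓ : 1 ≤ ℓ) (ht : StrictMono t) (x : Fin n) :
    partner t (partner t x) ≠ x := by
  intro h
  have h1 := (posCode_eq_iff ht _ x).2 h.symm
  have h2 : posCode t (partner t x) = 2 * (partnerIdx ℓ (posCode t x)).val + 1 :=
    posCode_apply ht _
  rw [h2] at h1
  have := val_partnerIdx (posCode_le t x)
  have := val_partnerIdx (ℓ := ℓ) (c := 2 * (partnerIdx ℓ (posCode t x)).val + 1) (by omega)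
  omega

lemma mem_arcTransversals_two_iff (hℓ : 1 ≤ ℓ) (ht : StrictMono t) {e : Finset (Fin n)} :
    e ∈ arcTransversals 2 t ↔ ∃ x, e = {x, partner t x} := by
  simp only [arcTransversals, mem_filter, mem_powersetCard, subset_univ, true_and]
  constructor
  · rintro ⟨he, h⟩
    obtain ⟨x, y, -, rfl⟩ := card_eq_two.1 he
    rcases (forall_pair_inter_arcCC_nonempty_iff ht x y).1 h with rfl | rfl
    · exact ⟨x, rfl⟩
    · exact ⟨y, pair_comm _ _⟩
  · rintro ⟨x, rfl⟩
    exact ⟨card_pair (partner_ne_self hℓ ht x).symm,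
      (forall_pair_inter_arcCC_nonempty_iff ht _ _).2 (Or.inl rfl)⟩

lemma pair_partner_injective (hℓ : 1 ≤ ℓ) (ht : StrictMono t) :
    Function.Injective fun x => ({x, partner t x} : Finset (Fin n)) := by
  intro x y hxy
  simp only at hxy
  have hx : x ∈ ({y, partner t y} : Finset (Fin n)) := by rw [← hxy]; exact mem_insert_self _ _
  have hy : y ∈ ({x, partner t x} : Finset (Fin n)) := by rw [hxy]; exact mem_insert_self _ _
  simp only [mem_insert, mem_singleton] at hx hy
  rcases hx with rfl | hx
  · rfl
  rcases hy with rfl | hy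
  · rfl
  exact (partner_partner_ne_self hℓ ht x (by rw [← hy, hx])).elim

lemma partner_apply (ht : StrictMono t) (q : Fin (2 * ℓ + 1)) :
    partner t (t q) = t (q + ℓ + 1) := by
  rw [partner, posCode_apply ht]
  congr 1
  ext
  have := val_partnerIdx (ℓ := ℓ) (c := 2 * q.val + 1) (by omega)
  rw [val_add_half_add_one]
  split_ifs <;> omega

lemma partner_eq_of_mem_arcOO (ht : StrictMono t) {q : Fin (2 * ℓ + 1)} {v : Fin n}
    (hv : v ∈ arcOO (t (q + ℓ)) (t (q + ℓ + 1))) : partner t v = t q := by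
  rw [mem_arcOO_iff_posCode ht, val_add_half, val_add_half_add_one] at hv
  rw [partner]
  congr 1
  ext
  have := val_partnerIdx (posCode_le t v)
  have := posCode_le t v
  split_ifs at hv <;> omega

lemma exists_eq_apply_or_mem_arcOO (ht : StrictMono t) (x : Fin n) :
    (∃ q, x = t q) ∨ x ∈ arcOO (t (partnerIdx ℓ (posCode t x) + ℓ))
      (t (partnerIdx ℓ (posCode t x) + ℓ + 1)) := by
  have hx := posCode_le t x
  rcases Nat.even_or_odd' (posCode t x) with ⟨a, ha | ha⟩
  · right
    have := val_partnerIdx hx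
    rw [mem_arcOO_iff_posCode ht, val_add_half, val_add_half_add_one]
    split_ifs <;> omega
  · exact Or.inl ⟨⟨a, by omega⟩, eq_of_posCode_eq ht ha⟩

theorem arcTransversals_two_structure (hℓ : 1 ≤ ℓ) (ht : StrictMono t) :
    (∀ e, e ∈ arcTransversals 2 t ↔ (∃ q, e = {t q, t (q + ℓ + 1)}) ∨
      ∃ q, ∃ v ∈ arcOO (t (q + ℓ)) (t (q + ℓ + 1)), e = {v, t q}) ∧
    #(arcTransversals 2 t) = n := by
  refine ⟨fun e => ⟨fun he => ?_, fun he => (mem_arcTransversals_two_iff hℓ ht).2 ?_⟩, ?_⟩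
  · obtain ⟨x, rfl⟩ := (mem_arcTransversals_two_iff hℓ ht).1 he
    rcases exists_eq_apply_or_mem_arcOO ht x with ⟨q, rfl⟩ | hx
    · exact Or.inl ⟨q, by rw [partner_apply ht]⟩
    · exact Or.inr ⟨_, x, hx, rfl⟩
  · rcases he with ⟨q, rfl⟩ | ⟨q, v, hv, rfl⟩
    · exact ⟨t q, by rw [partner_apply ht]⟩
    · exact ⟨v, by rw [partner_eq_of_mem_arcOO ht hv]⟩
  · have : arcTransversals 2 t = univ.image fun x => {x, partner t x} := by
      ext e
      simp [mem_arcTransversals_two_iff hℓ ht, eq_comm]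
    rw [this, card_image_of_injective _ (pair_partner_injective hℓ ht), card_univ,
      Fintype.card_fin]

end Sorted

theorem HnC_two_structure (n ℓ : ℕ) (hℓ : 1 ≤ ℓ) (w : Fin (2 * ℓ + 1) → Fin n)
    (hw : SemiValid ℓ w) :
    (∀ e : Finset (Fin n), e ∈ HnC 2 ℓ w ↔
      ((∃ i : Fin (2 * ℓ + 1), e = {w i, w (i + 1)}) ∨
        (∃ i : Fin (2 * ℓ + 1), ∃ v ∈ arcOO (w (i - 1)) (w (i + 1)), e = {v, w i}))) ∧
    (HnC 2 ℓ w).card = n := by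
  obtain ⟨t, ht, π, hπ, hwt, hpred, hsucc⟩ := hw.exists_strictMono
  obtain ⟨hmem, hcard⟩ := arcTransversals_two_structure hℓ ht
  rw [HnC_eq_arcTransversals hπ hwt hpred]
  refine ⟨fun e => ?_, hcard⟩
  rw [hmem]
  simp only [hwt, hpred, hsucc]
  exact or_congr hπ.exists hπ.exists
end
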